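/- Let r ≥ 1, let λ_1 > λ_2 > … > λ_r > 0 be real numbers, and let p_1, …, p_r be nonzero real polynomials with deg p_j = n_j. Then the function f : ℝ → ℝ defined by f(x) = Σ_{j=1}^r p_j(x) λ_j^x has at most R := Σ_{j=1}^r (n_j + 1) − 1 pairwise distinct real roots. -/

import Mathlib

open Polynomial Real Finset

lemma rolle_fin {g : ℝ → ℝ} (hg : Differentiable ℝ g) (m : ℕ) (u : Fin (m + 1) → ℝ)
    (hu : StrictMono u) (h0 : ∀ i, g (u i) = 0) :
    ∃ v : Fin m → ℝ, StrictMono v ∧ ∀ i, deriv g (v i) = 0 := by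
  have H : ∀ i : Fin m, ∃ c ∈ Set.Ioo (u i.castSucc) (u i.succ), deriv g c = 0 := by
    intro i
    exact exists_deriv_eq_zero (hu (show i.castSucc < i.succ from Fin.castSucc_lt_succ))
      hg.continuous.continuousOn (by rw [h0, h0])
  choose v hv hv0 using H
  refine ⟨v, ?_, hv0⟩
  intro i j hij
  calc v i < u i.succ := (hv i).2
    _ ≤ u j.castSucc := hu.monotone (by simp [Fin.le_def]; omega)
    _ < v j := (hv j).1

lemma hasDerivAt_expsum {r : ℕ} (μ : Fin r → ℝ) (hμ : ∀ j, 0 < μ j)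
    (p : Fin r → Polynomial ℝ) (x : ℝ) :
    HasDerivAt (fun x => ∑ j, (p j).eval x * μ j ^ x)
      (∑ j, (Polynomial.derivative (p j) + Polynomial.C (Real.log (μ j)) * p j).eval x * μ j ^ x)
      x := by
  apply HasDerivAt.fun_sum
  intro j _
  have h1 : HasDerivAt (fun x => (p j).eval x * μ j ^ x)
      ((p j).derivative.eval x * μ j ^ x + (p j).eval x * (μ j ^ x * Real.log (μ j))) x :=
    ((p j).hasDerivAt x).mul (hasStrictDerivAt_const_rpow (hμ j) x).hasDerivAt
  refine h1.congr_deriv ?_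
  simp [Polynomial.eval_add, Polynomial.eval_mul]
  ring

lemma expsum_key : ∀ N r : ℕ, 1 ≤ r → ∀ (lam : Fin r → ℝ) (p : Fin r → Polynomial ℝ),
    Function.Injective lam → (∀ j, 0 < lam j) → (∀ j, p j ≠ 0) →
    (∑ j, ((p j).natDegree + 1)) ≤ N →
    ∀ (m : ℕ) (u : Fin m → ℝ), StrictMono u →
    (∀ i, ∑ j, (p j).eval (u i) * lam j ^ (u i) = 0) → m + 1 ≤ N := by
  intro N
  induction N using Nat.strong_induction_on with
  | _ N IH =>
  intro r hr lam p hinj hpos hp hdeg m u hu hroots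
  have hrN : r ≤ N := by
    calc r = ∑ _j : Fin r, 1 := by simp
      _ ≤ ∑ j, ((p j).natDegree + 1) := Finset.sum_le_sum (fun j _ => by omega)
      _ ≤ N := hdeg
  match m with
  | 0 => omega
  | m' + 1 =>
    obtain ⟨r', rfl⟩ : ∃ r', r = r' + 1 := ⟨r - 1, by omega⟩
    set L : Fin (r' + 1) := Fin.last r' with hL
    set μ : Fin (r' + 1) → ℝ := fun j => lam j / lam L with hμ
    have hμpos : ∀ j, 0 < μ j := fun j => div_pos (hpos j) (hpos L)
    have hμinj : Function.Injective μ := by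
      intro a b h
      have hLne : lam L ≠ 0 := (hpos L).ne'
      apply hinj
      simp only [hμ] at h
      field_simp at h
      exact h
    set q : Fin (r' + 1) → Polynomial ℝ :=
      fun j => Polynomial.derivative (p j) + Polynomial.C (Real.log (μ j)) * p j with hq
    set g : ℝ → ℝ := fun x => ∑ j, (p j).eval x * μ j ^ x with hg
    have hgd : ∀ x, HasDerivAt g (∑ j, (q j).eval x * μ j ^ x) x :=
      fun x => hasDerivAt_expsum μ hμpos p x
    have hdiff : Differentiable ℝ g := fun x => (hgd x).differentiableAt
    have hgz : ∀ i, g (u i) = 0 := by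
      intro i
      calc g (u i) = (∑ j, (p j).eval (u i) * lam j ^ (u i)) / lam L ^ (u i) := by
            rw [Finset.sum_div]
            refine Finset.sum_congr rfl fun j _ => ?_
            rw [hμ]
            rw [Real.div_rpow (hpos j).le (hpos L).le, mul_div_assoc]
        _ = 0 := by rw [hroots i, zero_div]
    obtain ⟨v, hv, hv0⟩ := rolle_fin hdiff m' u hu hgz
    have hv0' : ∀ i, ∑ j, (q j).eval (v i) * μ j ^ (v i) = 0 := by
      intro i
      rw [← (hgd (v i)).deriv]
      exact hv0 i
    have hμL : μ L = 1 := div_self (hpos L).ne'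
    have hqL : q L = Polynomial.derivative (p L) := by
      simp [hq, hμL]
    have hqne : ∀ j, j ≠ L → q j ≠ 0 ∧ (q j).natDegree ≤ (p j).natDegree := by
      intro j hj
      have hμ1 : μ j ≠ 1 := by
        intro h
        exact hj (hμinj (by rw [h, hμL]))
      have hc : Real.log (μ j) ≠ 0 :=
        Real.log_ne_zero.mpr ⟨(hμpos j).ne', hμ1, by nlinarith [hμpos j]⟩
      have hCp : (Polynomial.C (Real.log (μ j)) * p j).natDegree = (p j).natDegree :=
        natDegree_C_mul hc
      by_cases h0 : (p j).natDegree = 0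
      · have hd0 : Polynomial.derivative (p j) = 0 := derivative_of_natDegree_zero h0
        constructor
        · simp only [hq, hd0, zero_add]
          exact mul_ne_zero (by simpa using hc) (hp j)
        · simp only [hq, hd0, zero_add]
          omega
      · have hd : (Polynomial.derivative (p j)).natDegree < (p j).natDegree :=
          natDegree_derivative_lt h0
        constructor
        · intro hq0
          have h1 : Polynomial.derivative (p j) = -(Polynomial.C (Real.log (μ j)) * p j) :=
            eq_neg_of_add_eq_zero_left hq0
          have h2 := congrArg Polynomial.natDegree h1
          rw [natDegree_neg, hCp] at h2
          omega
        · exact le_trans (natDegree_add_le _ _) (by rw [hCp]; omega)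
    by_cases hdL : (p L).natDegree = 0
    · by_cases hr'0 : r' = 0
      · exfalso
        have huniv : (Finset.univ : Finset (Fin (r' + 1))) = {L} := by
          ext j
          simp only [Finset.mem_univ, Finset.mem_singleton, true_iff]
          apply Fin.ext
          have := j.isLt
          simp only [hL, Fin.val_last]
          omega
        have h := hroots 0
        rw [huniv, Finset.sum_singleton] at h
        have hrp : lam L ^ (u 0) ≠ 0 := (Real.rpow_pos_of_pos (hpos L) _).ne'
        have hev : (p L).eval (u 0) = 0 := by
          rcases mul_eq_zero.mp h with h' | h'
          · exact h'
          · exact absurd h' hrp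
        obtain ⟨c, hcp⟩ := natDegree_eq_zero.mp hdL
        rw [← hcp, Polynomial.eval_C] at hev
        exact hp L (by rw [← hcp, hev, map_zero])
      · have hqL0 : q L = 0 := by rw [hqL, derivative_of_natDegree_zero hdL]
        have hsum : ∀ x, (∑ j, (q j).eval x * μ j ^ x)
            = ∑ j : Fin r', (q j.castSucc).eval x * μ j.castSucc ^ x := by
          intro x
          rw [Fin.sum_univ_castSucc, hqL0]
          simp
        have hsub : ∑ j : Fin r', ((q j.castSucc).natDegree + 1) ≤ N - 1 := by
          have h1 : ∑ j : Fin r', ((q j.castSucc).natDegree + 1)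
              ≤ ∑ j : Fin r', ((p j.castSucc).natDegree + 1) := by
            refine Finset.sum_le_sum fun j _ => ?_
            have := (hqne j.castSucc (Fin.castSucc_lt_last j).ne).2
            omega
          have h2 : (∑ j : Fin (r' + 1), ((p j).natDegree + 1))
              = ∑ j : Fin r', ((p j.castSucc).natDegree + 1) + 1 := by
            rw [Fin.sum_univ_castSucc, hdL]
          omega
        have hIH := IH (N - 1) (by omega) r' (by omega)
          (fun j => μ j.castSucc) (fun j => q j.castSucc)
          (fun a b h => Fin.castSucc_injective _ (hμinj h))
          (fun j => hμpos _)
          (fun j => (hqne j.castSucc (Fin.castSucc_lt_last j).ne).1)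
          hsub m' v hv
          (fun i => by rw [← hsum]; exact hv0' i)
        omega
    · have hd : (Polynomial.derivative (p L)).natDegree < (p L).natDegree :=
        natDegree_derivative_lt hdL
      have hqLne : q L ≠ 0 := by
        rw [hqL]
        intro h
        exact hdL (natDegree_eq_zero_of_derivative_eq_zero h)
      have hsub : ∑ j, ((q j).natDegree + 1) ≤ N - 1 := by
        have h1 : ∑ j : Fin r', ((q j.castSucc).natDegree + 1)
            ≤ ∑ j : Fin r', ((p j.castSucc).natDegree + 1) := by
          refine Finset.sum_le_sum fun j _ => ?_
          have := (hqne j.castSucc (Fin.castSucc_lt_last j).ne).2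
          omega
        have h2 : (∑ j, ((q j).natDegree + 1))
            = ∑ j : Fin r', ((q j.castSucc).natDegree + 1) + ((q L).natDegree + 1) :=
          Fin.sum_univ_castSucc _
        have h3 : (∑ j, ((p j).natDegree + 1))
            = ∑ j : Fin r', ((p j.castSucc).natDegree + 1) + ((p L).natDegree + 1) :=
          Fin.sum_univ_castSucc _
        have h4 : (q L).natDegree + 1 ≤ (p L).natDegree := by rw [hqL]; omega
        omega
      have hqne' : ∀ j, q j ≠ 0 := by
        intro j
        by_cases hj : j = L
        · rw [hj]; exact hqLne
        · exact (hqne j hj).1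
      have hIH := IH (N - 1) (by omega) (r' + 1) (by omega) μ q hμinj hμpos hqne'
        hsub m' v hv hv0'
      omega

/-- A finite sum `f(x) = Σ_j p_j(x) λ_j^x` of polynomials times decaying exponentials,
with `λ_1 > λ_2 > … > λ_r > 0` and `p_j ≠ 0` of degree `n_j`, has at most
`R = Σ_j (n_j + 1) − 1` pairwise distinct real roots. -/
theorem exp_polynomial_roots_bound
    (r : ℕ) (hr : 1 ≤ r) (lam : Fin r → ℝ) (p : Fin r → Polynomial ℝ)
    (hdec : ∀ i j : Fin r, i < j → lam j < lam i) (hpos : ∀ j, 0 < lam j)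
    (hp : ∀ j, p j ≠ 0)
    (f : ℝ → ℝ) (hf : ∀ x : ℝ, f x = ∑ j, (p j).eval x * (lam j) ^ x)
    (R : ℕ) (hR : R + 1 = ∑ j, ((p j).natDegree + 1)) :
    ∀ S : Finset ℝ, (∀ x ∈ S, f x = 0) → S.card ≤ R := by
  intro S hS
  have hinj : Function.Injective lam := by
    intro a b h
    by_contra hne
    rcases lt_or_gt_of_ne hne with h' | h'
    · exact absurd h (hdec a b h').ne'
    · exact absurd h (hdec b a h').ne
  let e := S.orderIsoOfFin rfl
  have hu : StrictMono (fun i => ((e i : S) : ℝ)) := fun a b h => e.lt_iff_lt.mpr h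
  have hroots : ∀ i : Fin S.card,
      ∑ j, (p j).eval ((e i : S) : ℝ) * lam j ^ (((e i : S) : ℝ)) = 0 := by
    intro i
    rw [← hf]
    exact hS _ (e i).2
  have := expsum_key (R + 1) r hr lam p hinj hpos hp (le_of_eq hR.symm)
    S.card (fun i => ((e i : S) : ℝ)) hu hroots
  omega
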